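/- Let M = (S, A, AP, L, I) be an interval Markov decision process and let s, t ∈ S with s ∼∀ t. Then for every PCTL state formula φ, s ⊨∀ φ if and only if t ⊨∀ φ. -/

import Mathlib

/-!
Induction on the formula; only the probabilistic operator needs an argument. Fix a
bisimulation `R` with `R s t` and a scheduler/nature pair `(σ, π)` started at `t`. We build a
pair `(σ', π')` started at `s` under which every `R`-class of histories of each length has the
same probability as under `(σ, π)`. After a history `f`, the pair `(σ', π')` plays the mixture,
over the histories `g` that are `R`-equivalent to `f` and weighted by their probabilities, of
steps from the last state of `f` that match the step of `(σ, π)` after `g` class by class. These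
steps exist by the bisimulation condition. The mixture is again a convex combination of feasible
distributions, so some scheduler and nature realize it. The event of a path formula is an
increasing union of events that depend, up to `R`, only on a finite prefix. So it has the same
probability under both pairs, and by symmetry of `R` the probabilities achievable from `s` and
from `t` coincide.
-/

open scoped Classical
open MeasureTheory

structure IMDP (S A AP : Type) [Fintype S] [Fintype A] : Type where
  L : S → Set AP
  Il : S → A → S → ℝ
  Iu : S → A → S → ℝ
  Il_nonneg : ∀ s a s', 0 ≤ Il s a s'
  Il_le_Iu : ∀ s a s', Il s a s' ≤ Iu s a s'
  Iu_le_one : ∀ s a s', Iu s a s' ≤ 1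
  feasible_nonempty : ∀ s a, ∃ μ : S → ℝ,
    (∀ s', 0 ≤ μ s') ∧ (∑ s', μ s') = 1 ∧
      ∀ s', μ s' ∈ Set.Icc (Il s a s') (Iu s a s')

def IsDist {X : Type} [Fintype X] (μ : X → ℝ) : Prop :=
  (∀ x, 0 ≤ μ x) ∧ (∑ x, μ x) = 1

def Feasible {S A AP : Type} [Fintype S] [Fintype A] (M : IMDP S A AP)
    (s : S) (a : A) (μ : S → ℝ) : Prop :=
  IsDist μ ∧ ∀ s', μ s' ∈ Set.Icc (M.Il s a s') (M.Iu s a s')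

noncomputable def classMass {S : Type} [Fintype S] (R : S → S → Prop)
    (μ : S → ℝ) (c : S) : ℝ :=
  ∑ s', if R c s' then μ s' else 0

def StepTo {S A AP : Type} [Fintype S] [Fintype A] (M : IMDP S A AP)
    (s : S) (μ : S → ℝ) : Prop :=
  μ ∈ convexHull ℝ (⋃ a : A, {ν : S → ℝ | Feasible M s a ν})

def IsForallBisim {S A AP : Type} [Fintype S] [Fintype A] (M : IMDP S A AP)
    (R : S → S → Prop) : Prop :=
  Equivalence R ∧ ∀ s t : S, R s t → M.L s = M.L t ∧
    ∀ μ : S → ℝ, StepTo M s μ →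
      ∃ ν : S → ℝ, StepTo M t ν ∧ ∀ c : S, classMass R μ c = classMass R ν c

def SimForall {S A AP : Type} [Fintype S] [Fintype A] (M : IMDP S A AP)
    (s t : S) : Prop :=
  ∃ R : S → S → Prop, IsForallBisim M R ∧ R s t

inductive Cmp : Type where
  | le : Cmp
  | lt : Cmp
  | ge : Cmp
  | gt : Cmp

def Cmp.eval : Cmp → ℝ → ℝ → Prop
  | Cmp.le, x, y => x ≤ y
  | Cmp.lt, x, y => x < y
  | Cmp.ge, x, y => y ≤ x
  | Cmp.gt, x, y => y < x

mutual
  inductive StateFormula (AP : Type) : Type where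
    | tt : StateFormula AP
    | atom : AP → StateFormula AP
    | neg : StateFormula AP → StateFormula AP
    | conj : StateFormula AP → StateFormula AP → StateFormula AP
    | prob : Cmp → (p : ℚ) → 0 ≤ p → p ≤ 1 → PathFormula AP → StateFormula AP
  inductive PathFormula (AP : Type) : Type where
    | next : StateFormula AP → PathFormula AP
    | untl : StateFormula AP → StateFormula AP → PathFormula AP
    | buntl : ℕ → StateFormula AP → StateFormula AP → PathFormula AP
end

abbrev FinPath (S : Type) : Type := {l : List S // l ≠ []}

structure Scheduler (S A : Type) [Fintype A] : Type where
  f : FinPath S → A → ℝ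
  dist : ∀ ω : FinPath S, IsDist (f ω)

structure Nature {S A AP : Type} [Fintype S] [Fintype A] (M : IMDP S A AP) : Type where
  f : FinPath S → A → S → ℝ
  feasible : ∀ (ω : FinPath S) (a : A), Feasible M (ω.1.getLast ω.2) a (f ω a)

def Cyl {S : Type} (l : List S) : Set (ℕ → S) :=
  {ρ | ∀ i : Fin l.length, ρ (i : ℕ) = l.get i}

def pathSigma (S : Type) : MeasurableSpace (ℕ → S) :=
  MeasurableSpace.generateFrom {C : Set (ℕ → S) | ∃ l : List S, l ≠ [] ∧ C = Cyl l}

def IsPathMeasure {S A AP : Type} [Fintype S] [Fintype A] (M : IMDP S A AP)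
    (s : S) (σ : Scheduler S A) (π : Nature M)
    (Pr : @Measure (ℕ → S) (pathSigma S)) : Prop :=
  IsProbabilityMeasure Pr ∧
  (∀ s' : S, Pr (Cyl [s']) = if s' = s then 1 else 0) ∧
  ∀ (l : List S) (h : l ≠ []) (s' : S),
    Pr (Cyl (l ++ [s'])) = Pr (Cyl l) *
      ENNReal.ofReal (∑ a, σ.f ⟨l, h⟩ a * π.f ⟨l, h⟩ a s')

mutual
  def SatA {S A AP : Type} [Fintype S] [Fintype A] (M : IMDP S A AP)
      (Pr : S → Scheduler S A → Nature M → @Measure (ℕ → S) (pathSigma S)) :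
      StateFormula AP → S → Prop
    | StateFormula.tt, _ => True
    | StateFormula.atom x, s => x ∈ M.L s
    | StateFormula.neg φ, s => ¬ SatA M Pr φ s
    | StateFormula.conj φ₁ φ₂, s => SatA M Pr φ₁ s ∧ SatA M Pr φ₂ s
    | StateFormula.prob c p _ _ ψ, s =>
        ∀ (σ : Scheduler S A) (π : Nature M),
          Cmp.eval c ((Pr s σ π {ρ : ℕ → S | PSatA M Pr ψ ρ}).toReal) (p : ℝ)
  def PSatA {S A AP : Type} [Fintype S] [Fintype A] (M : IMDP S A AP)
      (Pr : S → Scheduler S A → Nature M → @Measure (ℕ → S) (pathSigma S)) :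
      PathFormula AP → (ℕ → S) → Prop
    | PathFormula.next φ, ρ => SatA M Pr φ (ρ 1)
    | PathFormula.untl φ₁ φ₂, ρ => ∃ k : ℕ, ∃ i : ℕ, i < k ∧ SatA M Pr φ₂ (ρ i) ∧
        ∀ j : ℕ, j < i → SatA M Pr φ₁ (ρ j)
    | PathFormula.buntl k φ₁ φ₂, ρ => ∃ i : ℕ, i < k ∧ SatA M Pr φ₂ (ρ i) ∧
        ∀ j : ℕ, j < i → SatA M Pr φ₁ (ρ j)
end


theorem exists_sum_smul_eq_of_mem_convexHull_iUnion {ι E : Type*} [Fintype ι]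
    [AddCommGroup E] [Module ℝ E] {s : ι → Set E} (hs : ∀ i, Convex ℝ (s i))
    (hne : ∀ i, (s i).Nonempty) {x : E} (hx : x ∈ convexHull ℝ (⋃ i, s i)) :
    ∃ w : ι → ℝ, ∃ z : ι → E,
      (∀ i, 0 ≤ w i) ∧ ∑ i, w i = 1 ∧ (∀ i, z i ∈ s i) ∧ ∑ i, w i • z i = x := by
  refine convexHull_min (t := {x | ∃ w : ι → ℝ, ∃ z : ι → E,
    (∀ i, 0 ≤ w i) ∧ ∑ i, w i = 1 ∧ (∀ i, z i ∈ s i) ∧ ∑ i, w i • z i = x}) ?_ ?_ hx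
  · rintro y ⟨_, ⟨i, rfl⟩, hy⟩
    choose z₀ hz₀ using hne
    refine ⟨Pi.single i 1, Function.update z₀ i y, fun j => ?_, by simp, fun j => ?_, ?_⟩
    · by_cases hj : j = i <;> simp [hj]
    · by_cases hj : j = i
      · subst hj; simpa using hy
      · simpa [hj] using hz₀ j
    · simp [Pi.single_apply]
  · rintro _ ⟨w, z, hw, hw1, hz, rfl⟩ _ ⟨w', z', hw', hw1', hz', rfl⟩ a b ha hb hab
    let u i := a * w i + b * w' i
    have hu i : 0 ≤ u i := add_nonneg (mul_nonneg ha (hw i)) (mul_nonneg hb (hw' i))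
    -- the `i`-th points of both combinations are merged, in proportion to their new weights
    refine ⟨u, fun i => if u i = 0 then z i else (a * w i / u i) • z i + (b * w' i / u i) • z' i,
      hu, ?_, fun i => ?_, ?_⟩
    · simp only [u, Finset.sum_add_distrib, ← Finset.mul_sum, hw1, hw1', hab, mul_one]
    · dsimp only
      split_ifs with h
      · exact hz i
      · refine hs i (hz i) (hz' i) (div_nonneg (mul_nonneg ha (hw i)) (hu i))
          (div_nonneg (mul_nonneg hb (hw' i)) (hu i)) ?_
        rw [← add_div, div_self h]
    · simp only [Finset.smul_sum, ← Finset.sum_add_distrib, smul_smul]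
      refine Finset.sum_congr rfl fun i _ => ?_
      split_ifs with h
      · have ha0 : a * w i = 0 := by nlinarith [mul_nonneg ha (hw i), mul_nonneg hb (hw' i)]
        have hb0 : b * w' i = 0 := by nlinarith [mul_nonneg ha (hw i), mul_nonneg hb (hw' i)]
        simp [h, ha0, hb0]
      · rw [smul_add, smul_smul, smul_smul, mul_div_cancel₀ _ h, mul_div_cancel₀ _ h]

theorem Finset.sum_filter_eq_of_sum_class_eq {X : Type*} [Fintype X] {r : X → X → Prop}
    [DecidableRel r] (hr : Equivalence r) {w₁ w₂ : X → ℝ}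
    (hw : ∀ x, ∑ y with r x y, w₁ y = ∑ y with r x y, w₂ y)
    {p : X → Prop} [DecidablePred p] (hp : ∀ x y, r x y → p x → p y) :
    ∑ x with p x, w₁ x = ∑ x with p x, w₂ x := by
  classical
  let R : Setoid X := ⟨r, hr⟩
  have hclass (w : X → ℝ) (x : X) (hx : p x) :
      ∑ y with p y ∧ R.r y x, w y = ∑ y with r x y, w y := by
    refine Finset.sum_congr (Finset.ext fun y => ?_) fun _ _ => rfl
    simp only [Finset.mem_filter, Finset.mem_univ, true_and]
    exact ⟨fun h => hr.symm h.2, fun h => ⟨hp x y h hx, hr.symm h⟩⟩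
  rw [Finset.sum_partition R, Finset.sum_partition R]
  refine Finset.sum_congr rfl fun c hc => ?_
  obtain ⟨x, hx, rfl⟩ := Finset.mem_image.1 hc
  simp only [Finset.filter_filter, Quotient.eq]
  rw [hclass w₁ x (Finset.mem_filter.1 hx).2, hclass w₂ x (Finset.mem_filter.1 hx).2, hw]

theorem snoc_rel_snoc_iff {S : Type} (R : S → S → Prop) {n : ℕ} (f g : Fin n → S) (c u : S) :
    (∀ i, R (Fin.snoc (α := fun _ => S) f c i) (Fin.snoc (α := fun _ => S) g u i)) ↔
      (∀ i, R (f i) (g i)) ∧ R c u := by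
  simp [Fin.forall_fin_succ']

def FinPath.ofFn {S : Type} {n : ℕ} (f : Fin (n + 1) → S) : FinPath S :=
  ⟨List.ofFn f, by simp⟩

theorem FinPath.getLast_ofFn {S : Type} {n : ℕ} (f : Fin (n + 1) → S) :
    (FinPath.ofFn f).1.getLast (FinPath.ofFn f).2 = f (Fin.last n) :=
  List.getLast_ofFn_succ f

theorem FinPath.exists_ofFn_eq {S : Type} (ω : FinPath S) :
    ∃ p : Σ n, Fin (n + 1) → S, FinPath.ofFn p.2 = ω := by
  obtain ⟨l, hl⟩ := ω
  obtain ⟨a, l, rfl⟩ := List.exists_cons_of_ne_nil hl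
  exact ⟨⟨l.length, (a :: l).get⟩, Subtype.ext (List.ofFn_get (a :: l))⟩

theorem FinPath.ofFn_inj {S : Type} {m n : ℕ} {f : Fin (m + 1) → S} {g : Fin (n + 1) → S}
    (h : FinPath.ofFn f = FinPath.ofFn g) : (⟨m, f⟩ : Σ k, Fin (k + 1) → S) = ⟨n, g⟩ := by
  cases List.ofFn_inj'.1 (congrArg Subtype.val h)
  rfl

theorem mem_cyl_ofFn {S : Type} {n : ℕ} (f : Fin n → S) (ρ : ℕ → S) :
    ρ ∈ Cyl (List.ofFn f) ↔ (fun i : Fin n => ρ i) = f := by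
  rw [funext_iff]
  constructor
  · intro h i
    simpa using h (Fin.cast (List.length_ofFn (f := f)).symm i)
  · intro h i
    rw [List.get_ofFn]
    exact h (Fin.cast List.length_ofFn i)

theorem measurableSet_cyl {S : Type} {l : List S} (hl : l ≠ []) :
    MeasurableSet[pathSigma S] (Cyl l) :=
  MeasurableSpace.measurableSet_generateFrom ⟨l, hl, rfl⟩

theorem Scheduler.nonempty {S A : Type} [Fintype A] (σ : Scheduler S A) (s : S) :
    Nonempty A := by
  by_contra hA
  have h := (σ.dist ⟨[s], List.cons_ne_nil _ _⟩).2
  rw [not_nonempty_iff] at hA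
  simp at h

section Steps

variable {S A AP : Type} [Fintype S] [Fintype A] {M : IMDP S A AP}

theorem convex_feasible (M : IMDP S A AP) (s : S) (a : A) :
    Convex ℝ {ν : S → ℝ | Feasible M s a ν} := by
  have : {ν : S → ℝ | Feasible M s a ν} =
      stdSimplex ℝ S ∩ Set.univ.pi fun s' => Set.Icc (M.Il s a s') (M.Iu s a s') := by
    ext ν
    simp only [Feasible, IsDist, stdSimplex, Set.mem_inter_iff, Set.mem_univ_pi]
    rfl
  rw [this]
  exact (convex_stdSimplex ℝ S).inter (convex_pi fun _ _ => convex_Icc _ _)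

theorem stepTo_sum_smul {s : S} {w : A → ℝ} {ν : A → S → ℝ} (hw : IsDist w)
    (hν : ∀ a, Feasible M s a (ν a)) : StepTo M s (∑ a, w a • ν a) :=
  (convex_convexHull ℝ _).sum_mem (fun a _ => hw.1 a) hw.2
    fun a _ => subset_convexHull ℝ _ (Set.mem_iUnion.2 ⟨a, hν a⟩)

theorem StepTo.exists_sum_smul_eq {s : S} {μ : S → ℝ} (h : StepTo M s μ) :
    ∃ w : A → ℝ, ∃ ν : A → S → ℝ, IsDist w ∧ (∀ a, Feasible M s a (ν a)) ∧
      ∑ a, w a • ν a = μ := by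
  obtain ⟨w, ν, hw, hw1, hν, rfl⟩ := exists_sum_smul_eq_of_mem_convexHull_iUnion
    (convex_feasible M s)
    (fun a => (M.feasible_nonempty s a).imp fun _ h => ⟨⟨h.1, h.2.1⟩, h.2.2⟩) h
  exact ⟨w, ν, ⟨hw, hw1⟩, hν, rfl⟩

theorem exists_stepTo [Nonempty A] (M : IMDP S A AP) (s : S) : ∃ μ, StepTo M s μ :=
  (M.feasible_nonempty s (Classical.arbitrary A)).imp fun _ h =>
    subset_convexHull ℝ _ (Set.mem_iUnion.2 ⟨_, ⟨h.1, h.2.1⟩, h.2.2⟩)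

noncomputable def stepDist (σ : Scheduler S A) (π : Nature M) (ω : FinPath S) (u : S) : ℝ :=
  ∑ a, σ.f ω a * π.f ω a u

theorem stepDist_eq_sum_smul (σ : Scheduler S A) (π : Nature M) (ω : FinPath S) :
    stepDist σ π ω = ∑ a, σ.f ω a • π.f ω a := by
  ext u
  simp [stepDist, Finset.sum_apply]

theorem stepTo_stepDist (σ : Scheduler S A) (π : Nature M) (ω : FinPath S) :
    StepTo M (ω.1.getLast ω.2) (stepDist σ π ω) :=
  stepDist_eq_sum_smul σ π ω ▸ stepTo_sum_smul (σ.dist ω) (π.feasible ω)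

theorem stepDist_nonneg (σ : Scheduler S A) (π : Nature M) (ω : FinPath S) (u : S) :
    0 ≤ stepDist σ π ω u :=
  Finset.sum_nonneg fun a _ => mul_nonneg ((σ.dist ω).1 a) ((π.feasible ω a).1.1 u)

theorem classMass_sum_smul {ι : Type*} (R : S → S → Prop) (s : Finset ι) (w : ι → ℝ)
    (ν : ι → S → ℝ) (c : S) :
    classMass R (∑ i ∈ s, w i • ν i) c = ∑ i ∈ s, w i * classMass R (ν i) c := by
  simp only [classMass, Finset.sum_apply, Pi.smul_apply, smul_eq_mul, Finset.mul_sum,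
    ← Finset.sum_filter]
  exact Finset.sum_comm

end Steps

section PathWeight

variable {S A AP : Type} [Fintype S] [Fintype A] {M : IMDP S A AP}

noncomputable def pathWeight (x : S) (σ : Scheduler S A) (π : Nature M) :
    (n : ℕ) → (Fin (n + 1) → S) → ℝ
  | 0, f => if f 0 = x then 1 else 0
  | n + 1, f => pathWeight x σ π n (Fin.init f) *
      stepDist σ π (FinPath.ofFn (Fin.init f)) (f (Fin.last (n + 1)))

theorem pathWeight_snoc (x : S) (σ : Scheduler S A) (π : Nature M) {n : ℕ}
    (f : Fin (n + 1) → S) (u : S) :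
    pathWeight x σ π (n + 1) (Fin.snoc f u) =
      pathWeight x σ π n f * stepDist σ π (FinPath.ofFn f) u := by
  simp [pathWeight]

theorem pathWeight_nonneg (x : S) (σ : Scheduler S A) (π : Nature M) :
    ∀ (n : ℕ) (f : Fin (n + 1) → S), 0 ≤ pathWeight x σ π n f
  | 0, f => by unfold pathWeight; split_ifs <;> norm_num
  | n + 1, f => mul_nonneg (pathWeight_nonneg x σ π n _) (stepDist_nonneg σ π _ _)

theorem IsPathMeasure.measure_cyl_ofFn {x : S} {σ : Scheduler S A} {π : Nature M}
    {P : @Measure (ℕ → S) (pathSigma S)} (hP : IsPathMeasure M x σ π P) :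
    ∀ (n : ℕ) (f : Fin (n + 1) → S),
      P (Cyl (List.ofFn f)) = ENNReal.ofReal (pathWeight x σ π n f)
  | 0, f => by
    rw [List.ofFn_succ, List.ofFn_zero, hP.2.1, pathWeight]
    split_ifs <;> simp
  | n + 1, f => by
    have hf : List.ofFn f = (FinPath.ofFn (Fin.init f)).1 ++ [f (Fin.last (n + 1))] := by
      rw [List.ofFn_succ', List.concat_eq_append]; rfl
    rw [hf, hP.2.2]
    change P (Cyl (List.ofFn (Fin.init f))) * _ = _
    rw [IsPathMeasure.measure_cyl_ofFn hP n, pathWeight,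
      ENNReal.ofReal_mul (pathWeight_nonneg x σ π n _)]
    rfl

theorem IsPathMeasure.measure_setOf_prefix {x : S} {σ : Scheduler S A} {π : Nature M}
    {P : @Measure (ℕ → S) (pathSigma S)} (hP : IsPathMeasure M x σ π P) {n : ℕ}
    (Q : (Fin (n + 1) → S) → Prop) :
    P {ρ | Q fun i => ρ i} = ENNReal.ofReal (∑ f with Q f, pathWeight x σ π n f) := by
  have hset : {ρ : ℕ → S | Q fun i => ρ i} =
      ⋃ f ∈ Finset.univ.filter Q, Cyl (List.ofFn f) := by
    ext ρ
    simp only [Set.mem_iUnion, mem_cyl_ofFn, Finset.mem_filter, Finset.mem_univ, true_and,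
      exists_prop, exists_eq_right']
    rfl
  rw [hset, measure_biUnion_finset, ENNReal.ofReal_sum_of_nonneg]
  · exact Finset.sum_congr rfl fun f _ => hP.measure_cyl_ofFn n f
  · exact fun f _ => pathWeight_nonneg x σ π n f
  · intro f _ g _ hfg
    refine Set.disjoint_left.2 fun ρ hf hg => hfg ?_
    rw [← (mem_cyl_ofFn f ρ).1 hf, ← (mem_cyl_ofFn g ρ).1 hg]
  · exact fun f _ => measurableSet_cyl (by simp)

end PathWeight

section ClassWeight

variable {S A AP : Type} [Fintype S] [Fintype A] {M : IMDP S A AP}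

noncomputable def classWeight (R : S → S → Prop) (x : S) (σ : Scheduler S A) (π : Nature M)
    {n : ℕ} (f : Fin (n + 1) → S) : ℝ :=
  ∑ g with ∀ i, R (f i) (g i), pathWeight x σ π n g

variable {R : S → S → Prop} (x : S) (σ : Scheduler S A) (π : Nature M)

theorem classWeight_zero (f : Fin 1 → S) :
    classWeight R x σ π f = if R (f 0) x then 1 else 0 := by
  rw [classWeight, Finset.sum_filter]
  calc _ = ∑ v : S, if v = x then (if R (f 0) x then (1 : ℝ) else 0) else 0 :=
        Fintype.sum_equiv (Equiv.funUnique (Fin 1) S) _ _ fun g => by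
          by_cases hg : g 0 = x <;> simp [pathWeight, Fin.forall_fin_one, hg]
    _ = _ := by simp

theorem classWeight_congr (hR : Equivalence R) {n : ℕ} {f g : Fin (n + 1) → S}
    (hfg : ∀ i, R (f i) (g i)) : classWeight R x σ π g = classWeight R x σ π f := by
  refine Finset.sum_congr (Finset.ext fun h => ?_) fun _ _ => rfl
  simp only [Finset.mem_filter, Finset.mem_univ, true_and]
  exact ⟨fun hh i => hR.trans (hfg i) (hh i), fun hh i => hR.trans (hR.symm (hfg i)) (hh i)⟩

theorem classWeight_snoc {n : ℕ} (f : Fin (n + 1) → S) (c : S) :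
    classWeight R x σ π (Fin.snoc f c) =
      ∑ g with ∀ i, R (f i) (g i),
        pathWeight x σ π n g * classMass R (stepDist σ π (FinPath.ofFn g)) c := by
  rw [classWeight, Finset.sum_filter, Finset.sum_filter,
    ← Fintype.sum_equiv (Fin.snocEquiv fun _ => S)
      (fun p => if ∀ i, R (Fin.snoc (α := fun _ => S) f c i)
          (Fin.snoc (α := fun _ => S) p.2 p.1 i) then
        pathWeight x σ π (n + 1) (Fin.snoc p.2 p.1) else 0) _ (fun _ => rfl),
    Fintype.sum_prod_type_right]
  refine Finset.sum_congr rfl fun g _ => ?_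
  simp only [snoc_rel_snoc_iff, pathWeight_snoc, classMass, Finset.mul_sum]
  split_ifs with h <;> simp [h]

theorem classWeight_snoc_eq_zero {n : ℕ} {f : Fin (n + 1) → S}
    (h : classWeight R x σ π f = 0) (c : S) : classWeight R x σ π (Fin.snoc f c) = 0 := by
  have hw := (Finset.sum_eq_zero_iff_of_nonneg fun g _ => pathWeight_nonneg x σ π n g).1 h
  rw [classWeight_snoc]
  exact Finset.sum_eq_zero fun g hg => by rw [hw g hg, zero_mul]

end ClassWeight

section Transfer

variable {S A AP : Type} [Fintype S] [Fintype A] {M : IMDP S A AP} [Nonempty A]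
  {R : S → S → Prop}

theorem exists_stepTo_classMass (hR : IsForallBisim M R) (σ : Scheduler S A) (π : Nature M)
    (t : S) {n : ℕ} (f : Fin (n + 1) → S) :
    ∃ μ, StepTo M (f (Fin.last n)) μ ∧ ∀ c,
      classWeight R t σ π f * classMass R μ c = classWeight R t σ π (Fin.snoc f c) := by
  by_cases h0 : classWeight R t σ π f = 0
  · obtain ⟨μ, hμ⟩ := exists_stepTo M (f (Fin.last n))
    exact ⟨μ, hμ, fun c => by rw [h0, zero_mul, classWeight_snoc_eq_zero t σ π h0]⟩
  have hmatch : ∀ g : Fin (n + 1) → S, ∃ ν, (∀ i, R (f i) (g i)) →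
      StepTo M (f (Fin.last n)) ν ∧
        ∀ c, classMass R (stepDist σ π (FinPath.ofFn g)) c = classMass R ν c := by
    intro g
    by_cases hg : ∀ i, R (f i) (g i)
    · have hstep := stepTo_stepDist σ π (FinPath.ofFn g)
      rw [FinPath.getLast_ofFn] at hstep
      obtain ⟨ν, hν⟩ := (hR.2 _ _ (hR.1.symm (hg (Fin.last n)))).2 _ hstep
      exact ⟨ν, fun _ => hν⟩
    · exact ⟨0, fun h => absurd h hg⟩
  choose ν hν using hmatch
  refine ⟨∑ g with ∀ i, R (f i) (g i), (pathWeight t σ π n g / classWeight R t σ π f) • ν g,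
    (convex_convexHull ℝ _).sum_mem (fun g _ => ?_) ?_ fun g hg => ?_, fun c => ?_⟩
  · exact div_nonneg (pathWeight_nonneg t σ π n g)
      (Finset.sum_nonneg fun g _ => pathWeight_nonneg t σ π n g)
  · rw [← Finset.sum_div]
    exact div_self h0
  · exact (hν g (Finset.mem_filter.1 hg).2).1
  · rw [classMass_sum_smul, Finset.mul_sum, classWeight_snoc]
    refine Finset.sum_congr rfl fun g hg => ?_
    rw [(hν g (Finset.mem_filter.1 hg).2).2 c]
    field_simp

theorem exists_transferStep (hR : IsForallBisim M R) (σ : Scheduler S A) (π : Nature M)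
    (t : S) (ω : FinPath S) :
    ∃ wν : (A → ℝ) × (A → S → ℝ), IsDist wν.1 ∧
      (∀ a, Feasible M (ω.1.getLast ω.2) a (wν.2 a)) ∧
      ∀ (n : ℕ) (f : Fin (n + 1) → S), FinPath.ofFn f = ω → ∀ c,
        classWeight R t σ π f * classMass R (∑ a, wν.1 a • wν.2 a) c =
          classWeight R t σ π (Fin.snoc f c) := by
  obtain ⟨⟨n, f⟩, rfl⟩ := ω.exists_ofFn_eq
  obtain ⟨μ, hμ, hμc⟩ := exists_stepTo_classMass hR σ π t f
  rw [← FinPath.getLast_ofFn f] at hμ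
  obtain ⟨w, ν, hw, hν, rfl⟩ := hμ.exists_sum_smul_eq
  refine ⟨(w, ν), hw, hν, fun m g hg => ?_⟩
  cases FinPath.ofFn_inj hg
  exact hμc

noncomputable def transferScheduler (hR : IsForallBisim M R) (σ : Scheduler S A)
    (π : Nature M) (t : S) : Scheduler S A :=
  ⟨fun ω => (exists_transferStep hR σ π t ω).choose.1,
    fun ω => (exists_transferStep hR σ π t ω).choose_spec.1⟩

noncomputable def transferNature (hR : IsForallBisim M R) (σ : Scheduler S A)
    (π : Nature M) (t : S) : Nature M :=
  ⟨fun ω => (exists_transferStep hR σ π t ω).choose.2,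
    fun ω => (exists_transferStep hR σ π t ω).choose_spec.2.1⟩

theorem classWeight_mul_classMass_transfer (hR : IsForallBisim M R) (σ : Scheduler S A)
    (π : Nature M) (t : S) {n : ℕ} (f : Fin (n + 1) → S) (c : S) :
    classWeight R t σ π f *
        classMass R (stepDist (transferScheduler hR σ π t) (transferNature hR σ π t)
          (FinPath.ofFn f)) c =
      classWeight R t σ π (Fin.snoc f c) := by
  rw [stepDist_eq_sum_smul]
  exact (exists_transferStep hR σ π t _).choose_spec.2.2 n f rfl c

theorem classWeight_transfer (hR : IsForallBisim M R) (σ : Scheduler S A) (π : Nature M)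
    (t : S) {s : S} (hst : R s t) :
    ∀ (n : ℕ) (f : Fin (n + 1) → S),
      classWeight R s (transferScheduler hR σ π t) (transferNature hR σ π t) f =
        classWeight R t σ π f
  | 0, f => by
    rw [classWeight_zero, classWeight_zero]
    exact if_congr ⟨fun h => hR.1.trans h hst, fun h => hR.1.trans h (hR.1.symm hst)⟩ rfl rfl
  | n + 1, f => by
    set σ' := transferScheduler hR σ π t
    set π' := transferNature hR σ π t
    have ih := classWeight_transfer hR σ π t hst n
    rw [← Fin.snoc_init_self f]
    generalize Fin.init f = f₀, f (Fin.last (n + 1)) = c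
    have key : classWeight R t σ π f₀ * classWeight R s σ' π' (Fin.snoc f₀ c) =
        classWeight R t σ π f₀ * classWeight R t σ π (Fin.snoc f₀ c) :=
      calc _ = ∑ g with ∀ i, R (f₀ i) (g i), pathWeight s σ' π' n g *
              (classWeight R t σ π g * classMass R (stepDist σ' π' (FinPath.ofFn g)) c) := by
            rw [classWeight_snoc, Finset.mul_sum]
            refine Finset.sum_congr rfl fun g hg => ?_
            rw [classWeight_congr t σ π hR.1 (Finset.mem_filter.1 hg).2]
            ring
        _ = ∑ g with ∀ i, R (f₀ i) (g i), pathWeight s σ' π' n g *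
              classWeight R t σ π (Fin.snoc f₀ c) := by
            refine Finset.sum_congr rfl fun g hg => ?_
            rw [classWeight_mul_classMass_transfer hR σ π t, classWeight_congr t σ π hR.1
              ((snoc_rel_snoc_iff R f₀ g c c).2 ⟨(Finset.mem_filter.1 hg).2, hR.1.refl c⟩)]
        _ = _ := by rw [← Finset.sum_mul, ← classWeight, ih]
    by_cases h0 : classWeight R t σ π f₀ = 0
    · rw [classWeight_snoc_eq_zero t σ π h0, classWeight_snoc_eq_zero s σ' π' ((ih f₀).trans h0)]
    · exact mul_left_cancel₀ h0 key

end Transfer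

section Events

variable {S : Type} {R : S → S → Prop}

def IsClosedUpTo (R : S → S → Prop) (n : ℕ) (E : Set (ℕ → S)) : Prop :=
  ∀ ρ ρ', (∀ i ≤ n, R (ρ i) (ρ' i)) → ρ ∈ E → ρ' ∈ E

def IsBisimEvent (R : S → S → Prop) (E : Set (ℕ → S)) : Prop :=
  ∃ F : ℕ → Set (ℕ → S), Monotone F ∧ (∀ k, ∃ n, IsClosedUpTo R n (F k)) ∧ E = ⋃ k, F k

theorem IsClosedUpTo.isBisimEvent {n : ℕ} {E : Set (ℕ → S)} (hE : IsClosedUpTo R n E) :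
    IsBisimEvent R E :=
  ⟨fun _ => E, monotone_const, fun _ => ⟨n, hE⟩, (Set.iUnion_const E).symm⟩

theorem IsClosedUpTo.exists_eq_setOf_prefix (hR : Equivalence R) {n : ℕ} {E : Set (ℕ → S)}
    (hE : IsClosedUpTo R n E) :
    ∃ Q : (Fin (n + 1) → S) → Prop, (∀ f g, (∀ i, R (f i) (g i)) → Q f → Q g) ∧
      E = {ρ | Q fun i => ρ i} := by
  refine ⟨fun f => (fun i => f ⟨min i n, by omega⟩) ∈ E,
    fun f g hfg => hE _ _ fun i _ => hfg _, ?_⟩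
  ext ρ
  have hρ : ∀ i ≤ n, R (ρ i) (ρ (min i n)) := fun i hi => by
    rw [min_eq_left hi]; exact hR.refl _
  exact ⟨hE _ _ hρ, hE _ _ fun i hi => hR.symm (hρ i hi)⟩

theorem isClosedUpTo_next {P : S → Prop} (hP : ∀ u v, R u v → P u → P v) :
    IsClosedUpTo R 1 {ρ | P (ρ 1)} :=
  fun _ _ h => hP _ _ (h 1 le_rfl)

def untilWithin (P₁ P₂ : S → Prop) (k : ℕ) : Set (ℕ → S) :=
  {ρ | ∃ i < k, P₂ (ρ i) ∧ ∀ j < i, P₁ (ρ j)}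

theorem monotone_untilWithin (P₁ P₂ : S → Prop) : Monotone (untilWithin P₁ P₂) :=
  fun _ _ hkl _ ⟨i, hik, h⟩ => ⟨i, lt_of_lt_of_le hik hkl, h⟩

theorem isClosedUpTo_untilWithin {P₁ P₂ : S → Prop} (hP₁ : ∀ u v, R u v → P₁ u → P₁ v)
    (hP₂ : ∀ u v, R u v → P₂ u → P₂ v) (k : ℕ) :
    IsClosedUpTo R k (untilWithin P₁ P₂ k) := by
  rintro ρ ρ' h ⟨i, hik, h₂, h₁⟩
  exact ⟨i, hik, hP₂ _ _ (h i hik.le) h₂, fun j hji => hP₁ _ _ (h j (by omega)) (h₁ j hji)⟩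

theorem isBisimEvent_until {P₁ P₂ : S → Prop} (hP₁ : ∀ u v, R u v → P₁ u → P₁ v)
    (hP₂ : ∀ u v, R u v → P₂ u → P₂ v) :
    IsBisimEvent R {ρ | ∃ k, ∃ i, i < k ∧ P₂ (ρ i) ∧ ∀ j, j < i → P₁ (ρ j)} := by
  refine ⟨untilWithin P₁ P₂, monotone_untilWithin P₁ P₂,
    fun k => ⟨k, isClosedUpTo_untilWithin hP₁ hP₂ k⟩, Set.ext fun ρ => ?_⟩
  rw [Set.mem_iUnion]
  rfl

end Events

section MeasureTransfer

variable {S A AP : Type} [Fintype S] [Fintype A] {M : IMDP S A AP} [Nonempty A]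
  {R : S → S → Prop}

theorem measure_transfer_of_isClosedUpTo (hR : IsForallBisim M R) (σ : Scheduler S A)
    (π : Nature M) {s t : S} (hst : R s t) {P P' : @Measure (ℕ → S) (pathSigma S)}
    (hP : IsPathMeasure M t σ π P)
    (hP' : IsPathMeasure M s (transferScheduler hR σ π t) (transferNature hR σ π t) P')
    {n : ℕ} {E : Set (ℕ → S)} (hE : IsClosedUpTo R n E) : P' E = P E := by
  obtain ⟨Q, hQ, rfl⟩ := hE.exists_eq_setOf_prefix hR.1
  have hRn : Equivalence fun f g : Fin (n + 1) → S => ∀ i, R (f i) (g i) :=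
    ⟨fun _ _ => hR.1.refl _, fun h i => hR.1.symm (h i), fun h h' i => hR.1.trans (h i) (h' i)⟩
  rw [hP'.measure_setOf_prefix, hP.measure_setOf_prefix,
    Finset.sum_filter_eq_of_sum_class_eq hRn (classWeight_transfer hR σ π t hst n) hQ]

theorem measure_transfer_of_isBisimEvent (hR : IsForallBisim M R) (σ : Scheduler S A)
    (π : Nature M) {s t : S} (hst : R s t) {P P' : @Measure (ℕ → S) (pathSigma S)}
    (hP : IsPathMeasure M t σ π P)
    (hP' : IsPathMeasure M s (transferScheduler hR σ π t) (transferNature hR σ π t) P')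
    {E : Set (ℕ → S)} (hE : IsBisimEvent R E) : P' E = P E := by
  obtain ⟨F, hF, hFn, rfl⟩ := hE
  rw [hF.measure_iUnion, hF.measure_iUnion]
  exact iSup_congr fun k => (hFn k).elim fun _ h =>
    measure_transfer_of_isClosedUpTo hR σ π hst hP hP' h

end MeasureTransfer

theorem exists_measure_eq_of_isForallBisim {S A AP : Type} [Fintype S] [Fintype A]
    {M : IMDP S A AP} {R : S → S → Prop} (hR : IsForallBisim M R) {s t : S} (hst : R s t)
    (Pr : S → Scheduler S A → Nature M → @Measure (ℕ → S) (pathSigma S))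
    (hPr : ∀ x σ π, IsPathMeasure M x σ π (Pr x σ π)) (σ : Scheduler S A) (π : Nature M) :
    ∃ σ' π', ∀ E, IsBisimEvent R E → Pr s σ' π' E = Pr t σ π E := by
  have := σ.nonempty s
  exact ⟨_, _, fun E hE =>
    measure_transfer_of_isBisimEvent hR σ π hst (hPr t σ π) (hPr s _ _) hE⟩

theorem stmt0 {S A AP : Type} [Fintype S] [Fintype A] (M : IMDP S A AP)
    (Pr : S → Scheduler S A → Nature M → @Measure (ℕ → S) (pathSigma S))
    (hPr : ∀ (s : S) (σ : Scheduler S A) (π : Nature M), IsPathMeasure M s σ π (Pr s σ π))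
    (s t : S) (hst : SimForall M s t) :
    ∀ φ : StateFormula AP, SatA M Pr φ s ↔ SatA M Pr φ t := by
  intro φ
  suffices H : ∀ R, IsForallBisim M R → ∀ u v, R u v → SatA M Pr φ u → SatA M Pr φ v by
    obtain ⟨R, hR, hst⟩ := hst
    exact ⟨H R hR s t hst, H R hR t s (hR.1.symm hst)⟩
  refine StateFormula.rec (motive_2 := fun ψ => ∀ R, IsForallBisim M R →
    IsBisimEvent R {ρ | PSatA M Pr ψ ρ}) ?_ ?_ ?_ ?_ ?_ ?_ ?_ ?_ φ
  · exact fun _ _ _ _ _ _ => trivial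
  · intro x R hR u v huv (h : x ∈ M.L u)
    exact show x ∈ M.L v from (hR.2 u v huv).1 ▸ h
  · exact fun φ ih R hR u v huv h h' => h (ih R hR v u (hR.1.symm huv) h')
  · exact fun φ₁ φ₂ ih₁ ih₂ R hR u v huv h => ⟨ih₁ R hR u v huv h.1, ih₂ R hR u v huv h.2⟩
  · intro c p _ _ ψ ih R hR u v huv h σ π
    obtain ⟨σ', π', heq⟩ := exists_measure_eq_of_isForallBisim hR huv Pr hPr σ π
    exact heq _ (ih R hR) ▸ h σ' π'
  · exact fun φ ih R hR => (isClosedUpTo_next (ih R hR)).isBisimEvent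
  · exact fun φ₁ φ₂ ih₁ ih₂ R hR => isBisimEvent_until (ih₁ R hR) (ih₂ R hR)
  · exact fun k φ₁ φ₂ ih₁ ih₂ R hR =>
      (isClosedUpTo_untilWithin (ih₁ R hR) (ih₂ R hR) k).isBisimEvent
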